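/- Let $U$ be a dyadic open set in the plane and let $R = I \times J$ be a dyadic rectangle that is at least 2-deep in $U$ (meaning the second-generation parent rectangle $\hat{\hat I} \times \hat{\hat J}$ is contained in $U$). Then $(\mathbf{1}_U, T_1^* \tilde{\mathbf{1}}_I \otimes \tilde{\mathbf{1}}_J) = (\mathbf{1}_U, T_1^* \tilde{\mathbf{1}}_{\hat I} \otimes \tilde{\mathbf{1}}_J)$, where $\tilde{\mathbf{1}}_I = \mathbf{1}_I / |I|$. -/

import Mathlib

/-!
`𝟏̃_I` and `𝟏̃_{Î}` have the same Haar coefficient against every `h_K` with `K ≠ Î`: if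
`|K| ≤ |I|` both coefficients vanish, and otherwise `h_K` is constant on `Î ⊇ I`, where both
functions have mean one. Hence `T₁*(𝟏̃_I ⊗ 𝟏̃_J) − T₁*(𝟏̃_{Î} ⊗ 𝟏̃_J)` is a multiple of
`h_{Î̂} ⊗ 𝟏̃_J`, a function of integral zero supported in `Î̂ × J ⊆ Î̂ × Ĵ̂ ⊆ U`.
-/

open MeasureTheory
open scoped Classical

/-- A dyadic interval `[k·2^(-n), (k+1)·2^(-n))` on the real line, encoded by its
scale `n` (so that `|I| = 2^(-n)`) and its position `k`. -/
structure DI where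
  n : ℤ
  k : ℤ

namespace DI

/-- The underlying half-open interval of a dyadic interval. -/
noncomputable def set (I : DI) : Set ℝ :=
  Set.Ico ((I.k : ℝ) * (2:ℝ) ^ (-I.n)) (((I.k : ℝ) + 1) * (2:ℝ) ^ (-I.n))

/-- The length `|I| = 2^(-n)` of a dyadic interval. -/
noncomputable def len (I : DI) : ℝ := (2:ℝ) ^ (-I.n)

/-- `I` is *even* when `|I| = 2^(-2k)` for an integer `k`. -/
def IsEven (I : DI) : Prop := Even I.n

/-- The dyadic parent `Î` of `I`. -/
def parent (I : DI) : DI := ⟨I.n - 1, Int.ediv I.k 2⟩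

/-- The left (lower) half `I₋` of `I`. -/
def left (I : DI) : DI := ⟨I.n + 1, 2 * I.k⟩

/-- The right (upper) half `I₊` of `I`. -/
def right (I : DI) : DI := ⟨I.n + 1, 2 * I.k + 1⟩

/-- The dyadic sibling of `I` (the other child of `Î`). -/
def sibling (I : DI) : DI := if I.k % 2 = 1 then ⟨I.n, I.k - 1⟩ else ⟨I.n, I.k + 1⟩

/-- `sgn (I, Î)`: equal to `+1` if `I = (Î)₊` (the right child) and `-1` if `I = (Î)₋`. -/
noncomputable def sgn (I : DI) : ℝ := if I.k % 2 = 1 then 1 else -1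

/-- Containment of dyadic intervals. -/
def Sub (I J : DI) : Prop := I.set ⊆ J.set

end DI

/-- The Haar function `h_I = |I|^{-1/2} (𝟏_{I₊} - 𝟏_{I₋})`. -/
noncomputable def haar (I : DI) : ℝ → ℝ := fun x =>
  Real.sqrt ((2:ℝ) ^ I.n) *
    (if x ∈ DI.set (DI.right I) then 1 else if x ∈ DI.set (DI.left I) then -1 else 0)

/-- The Haar coefficient `(f, h_I)`. -/
noncomputable def hcoef (f : ℝ → ℝ) (I : DI) : ℝ := ∫ x, f x * haar I x

/-- The average `⟨f⟩_I = (f, 𝟏_I/|I|)`. -/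
noncomputable def avg (f : ℝ → ℝ) (I : DI) : ℝ := (∫ x in DI.set I, f x) / DI.len I

/-- The normalized indicator `𝟏̃_I = 𝟏_I/|I|`. -/
noncomputable def nind (I : DI) : ℝ → ℝ := fun x => if x ∈ DI.set I then 1 / DI.len I else 0

/-- The dyadic shift `T`, with `T h_I = h_{I₊} - h_{I₋}` for `I` even and `T h_I = 0`
for `I` odd. -/
noncomputable def shift (f : ℝ → ℝ) : ℝ → ℝ := fun x =>
  ∑' I : DI, if DI.IsEven I then hcoef f I * (haar (DI.right I) x - haar (DI.left I) x) else 0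

/-- The adjoint dyadic shift `T*`, with `T* h_I = sgn(I, Î) h_{Î}` for `I` odd and
`T* h_I = 0` for `I` even. -/
noncomputable def shiftAdj (f : ℝ → ℝ) : ℝ → ℝ := fun x =>
  ∑' I : DI, if DI.IsEven I then 0 else hcoef f I * DI.sgn I * haar (DI.parent I) x

/-- The paraproduct `D(b, f) = ∑_I ⟨b⟩_I (f, h_I) h_I`. -/
noncomputable def Dpara (b f : ℝ → ℝ) : ℝ → ℝ := fun x =>
  ∑' I : DI, avg b I * hcoef f I * haar I x

/-- The dyadic shift `T₁` acting in the first variable. -/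
noncomputable def shift1 (F : ℝ × ℝ → ℝ) : ℝ × ℝ → ℝ := fun p => shift (fun x => F (x, p.2)) p.1

/-- The dyadic shift `T₂` acting in the second variable. -/
noncomputable def shift2 (F : ℝ × ℝ → ℝ) : ℝ × ℝ → ℝ := fun p => shift (fun y => F (p.1, y)) p.2

/-- The adjoint shift `T₁*` acting in the first variable. -/
noncomputable def shift1Adj (F : ℝ × ℝ → ℝ) : ℝ × ℝ → ℝ := fun p =>
  shiftAdj (fun x => F (x, p.2)) p.1

/-- The adjoint shift `T₂*` acting in the second variable. -/
noncomputable def shift2Adj (F : ℝ × ℝ → ℝ) : ℝ × ℝ → ℝ := fun p =>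
  shiftAdj (fun y => F (p.1, y)) p.2

/-- The repeated commutator `𝒯^b = [T₂,[T₁,b]] = T₂T₁b· − T₂ b T₁ − T₁ b T₂ + b T₁T₂`. -/
noncomputable def repComm (b F : ℝ × ℝ → ℝ) : ℝ × ℝ → ℝ := fun p =>
  shift2 (shift1 (fun q => b q * F q)) p - shift2 (fun q => b q * shift1 F q) p
    - shift1 (fun q => b q * shift2 F q) p + b p * shift1 (shift2 F) p

/-- The repeated commutator with the adjoint shifts, `𝒯^b_* = [T₂*,[T₁*,b]]`. -/
noncomputable def repCommAdj (b F : ℝ × ℝ → ℝ) : ℝ × ℝ → ℝ := fun p =>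
  shift2Adj (shift1Adj (fun q => b q * F q)) p - shift2Adj (fun q => b q * shift1Adj F q) p
    - shift1Adj (fun q => b q * shift2Adj F q) p + b p * shift1Adj (shift2Adj F) p

/-- The bi-parameter Haar coefficient `(b, h_I ⊗ h_J)`. -/
noncomputable def hcoef2 (b : ℝ × ℝ → ℝ) (I J : DI) : ℝ :=
  ∫ p : ℝ × ℝ, b p * haar I p.1 * haar J p.2

/-- A dyadic rectangle `R = I × J` as a subset of the plane. -/
noncomputable def dRect (R : DI × DI) : Set (ℝ × ℝ) := DI.set R.1 ×ˢ DI.set R.2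

/-- The strong dyadic maximal function `M_s^d`. -/
noncomputable def strongMax (f : ℝ × ℝ → ℝ) (p : ℝ × ℝ) : ℝ :=
  sSup {r : ℝ | ∃ R : DI × DI, p ∈ dRect R ∧
    r = (∫ q in dRect R, |f q|) / (DI.len R.1 * DI.len R.2)}

/-- The enlargement `U = {M_s^d 𝟏_{U₀} ≥ 1/16}` of a set `U₀`. -/
noncomputable def enlarge (U0 : Set (ℝ × ℝ)) : Set (ℝ × ℝ) :=
  {p | (1:ℝ)/16 ≤ strongMax (U0.indicator fun _ => (1:ℝ)) p}

namespace DI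

lemma len_pos (I : DI) : 0 < I.len := by
  unfold len; positivity

lemma set_nonempty (I : DI) : I.set.Nonempty :=
  Set.nonempty_Ico.2 (by have := I.len_pos; unfold len at this; nlinarith)

lemma eq_of_n_eq_of_mem {I K : DI} {x : ℝ} (hn : I.n = K.n) (hI : x ∈ I.set)
    (hK : x ∈ K.set) : I = K := by
  obtain ⟨n, k⟩ := I
  obtain ⟨n', k'⟩ := K
  obtain rfl : n = n' := hn
  obtain ⟨hI₁, hI₂⟩ := hI
  obtain ⟨hK₁, hK₂⟩ := hK
  have hpos : (0 : ℝ) < 2 ^ (-n) := by positivity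
  have h₁ : (k : ℝ) < k' + 1 := lt_of_mul_lt_mul_right (hI₁.trans_lt hK₂) hpos.le
  have h₂ : (k' : ℝ) < k + 1 := lt_of_mul_lt_mul_right (hK₁.trans_lt hI₂) hpos.le
  norm_cast at h₁ h₂
  rw [show k = k' by omega]

lemma disjoint_of_n_eq_of_ne {I K : DI} (hn : I.n = K.n) (hne : I ≠ K) :
    Disjoint I.set K.set :=
  Set.disjoint_left.2 fun _ hI hK => hne (eq_of_n_eq_of_mem hn hI hK)

lemma left_union_right (I : DI) : I.left.set ∪ I.right.set = I.set := by
  have hpos : (0 : ℝ) < 2 ^ (-(I.n + 1)) := by positivity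
  have hlen : (2 : ℝ) ^ (-(I.n + 1)) * 2 = 2 ^ (-I.n) := by
    rw [← zpow_add_one₀ two_ne_zero]; ring_nf
  simp only [set, left, right]
  push_cast
  rw [Set.Ico_union_Ico_eq_Ico (by nlinarith) (by nlinarith), ← hlen]
  congr 1 <;> ring

lemma disjoint_left_right (I : DI) : Disjoint I.left.set I.right.set := by
  simp only [set, left, right]
  push_cast
  exact Set.Ico_disjoint_Ico_same

lemma left_subset (I : DI) : I.left.set ⊆ I.set :=
  I.left_union_right ▸ Set.subset_union_left

lemma right_subset (I : DI) : I.right.set ⊆ I.set :=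
  I.left_union_right ▸ Set.subset_union_right

lemma parent_left_or_parent_right (I : DI) : I.parent.left = I ∨ I.parent.right = I := by
  obtain ⟨n, k⟩ := I
  simp only [parent, left, right, mk.injEq, sub_add_cancel, true_and,
    show Int.ediv k 2 = k / 2 from rfl]
  omega

lemma set_subset_parent (I : DI) : I.set ⊆ I.parent.set := by
  rcases I.parent_left_or_parent_right with h | h
  · nth_rw 1 [← h]; exact I.parent.left_subset
  · nth_rw 1 [← h]; exact I.parent.right_subset

lemma n_iterate_parent (m : ℕ) (I : DI) : (parent^[m] I).n = I.n - m := by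
  induction m with
  | zero => simp
  | succ m ih =>
    rw [Function.iterate_succ_apply', show (parent _).n = _ - 1 from rfl, ih]
    push_cast; ring

lemma set_subset_iterate_parent (m : ℕ) (I : DI) : I.set ⊆ (parent^[m] I).set := by
  induction m with
  | zero => exact subset_rfl
  | succ m ih =>
    rw [Function.iterate_succ_apply']
    exact ih.trans (set_subset_parent _)

lemma eq_iterate_parent_of_subset {I K : DI} (hIK : I.set ⊆ K.set) (hn : K.n ≤ I.n) :
    K = parent^[(I.n - K.n).toNat] I := by
  obtain ⟨x, hx⟩ := I.set_nonempty
  refine eq_of_n_eq_of_mem ?_ (hIK hx) (set_subset_iterate_parent _ I hx)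
  rw [n_iterate_parent]
  omega

lemma subset_or_disjoint {I K : DI} (hn : K.n ≤ I.n) :
    I.set ⊆ K.set ∨ Disjoint I.set K.set := by
  set P := parent^[(I.n - K.n).toNat] I
  have hP : P.n = K.n := by rw [n_iterate_parent]; omega
  by_cases hPK : P = K
  · exact .inl (hPK ▸ set_subset_iterate_parent _ I)
  · exact .inr ((disjoint_of_n_eq_of_ne hP hPK).mono_left (set_subset_iterate_parent _ I))

lemma measurableSet_set (I : DI) : MeasurableSet I.set := measurableSet_Ico

lemma volume_set_lt_top (I : DI) : volume I.set < ⊤ := by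
  simp [set]

lemma integrable_indicator_const (I : DI) (c : ℝ) : Integrable (I.set.indicator fun _ => c) :=
  (integrable_indicator_iff I.measurableSet_set).2 (integrableOn_const I.volume_set_lt_top.ne)

lemma volume_real_set (I : DI) : volume.real I.set = I.len := by
  rw [set, Real.volume_real_Ico_of_le (by have := I.len_pos; unfold len at this; nlinarith), len]
  ring

lemma abs_sgn (I : DI) : |I.sgn| = 1 := by
  unfold sgn; split_ifs <;> simp

end DI

section Haar

variable {K : DI} {x : ℝ}

lemma haar_of_mem_right (hx : x ∈ K.right.set) : haar K x = √(2 ^ K.n) := by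
  simp [haar, hx]

lemma haar_of_mem_left (hx : x ∈ K.left.set) : haar K x = -√(2 ^ K.n) := by
  simp [haar, hx, Set.disjoint_left.1 K.disjoint_left_right hx]

lemma haar_of_notMem (hx : x ∉ K.set) : haar K x = 0 := by
  have hr : x ∉ K.right.set := fun h => hx (K.right_subset h)
  have hl : x ∉ K.left.set := fun h => hx (K.left_subset h)
  simp [haar, hr, hl]

lemma abs_haar_le (K : DI) (x : ℝ) : |haar K x| ≤ √(2 ^ K.n) := by
  unfold haar
  split_ifs <;> simp [abs_of_nonneg (Real.sqrt_nonneg _)]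

lemma haar_eq_indicator (K : DI) :
    haar K = fun x => √(2 ^ K.n) * (K.right.set.indicator 1 x - K.left.set.indicator 1 x) := by
  funext x
  by_cases hr : x ∈ K.right.set
  · simp [haar_of_mem_right hr, hr, Set.disjoint_right.1 K.disjoint_left_right hr]
  · by_cases hl : x ∈ K.left.set
    · simp [haar_of_mem_left hl, hl, hr]
    · simp [haar, hl, hr]

lemma integrable_haar (K : DI) : Integrable (haar K) := by
  rw [haar_eq_indicator]
  exact ((K.right.integrable_indicator_const 1).sub
    (K.left.integrable_indicator_const 1)).const_mul _

lemma integral_haar (K : DI) : ∫ x, haar K x = 0 := by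
  rw [haar_eq_indicator, integral_const_mul, integral_sub,
    integral_indicator_one K.right.measurableSet_set, integral_indicator_one K.left.measurableSet_set,
    DI.volume_real_set, DI.volume_real_set]
  · simp [DI.len, DI.left, DI.right]
  exacts [K.right.integrable_indicator_const 1, K.left.integrable_indicator_const 1]

lemma exists_forall_mem_haar_eq {L : DI} (hne : K ≠ L) (hn : K.n ≤ L.n) :
    ∃ c, ∀ x ∈ L.set, haar K x = c := by
  rcases DI.subset_or_disjoint hn with hsub | hdisj
  · have hlt : K.n < L.n := lt_of_le_of_ne hn fun h => hne <|
      DI.eq_of_n_eq_of_mem h (hsub L.set_nonempty.some_mem) L.set_nonempty.some_mem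
    rcases DI.subset_or_disjoint (I := L) (K := K.left) (by simp [DI.left]; omega)
      with hleft | hleft
    · exact ⟨_, fun x hx => haar_of_mem_left (hleft hx)⟩
    · refine ⟨_, fun x hx => haar_of_mem_right ?_⟩
      rw [← K.left_union_right] at hsub
      exact (hsub hx).resolve_left (Set.disjoint_left.1 hleft hx)
  · exact ⟨0, fun x hx => haar_of_notMem (Set.disjoint_left.1 hdisj hx)⟩

lemma hcoef_eq_zero_of_forall_mem_eq {f : ℝ → ℝ} {c : ℝ} (hf : ∀ x ∈ K.set, f x = c) :
    hcoef f K = 0 := by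
  have : (fun x => f x * haar K x) = fun x => c * haar K x := by
    funext x
    by_cases hx : x ∈ K.set
    · rw [hf x hx]
    · simp [haar_of_notMem hx]
  rw [hcoef, this, integral_const_mul, integral_haar, mul_zero]

end Haar

section NormalizedIndicator

variable {L K : DI}

lemma nind_eq_indicator (L : DI) : nind L = L.set.indicator fun _ => 1 / L.len := by
  funext x
  simp [nind, Set.indicator_apply]

lemma nind_of_mem {x : ℝ} (hx : x ∈ L.set) : nind L x = 1 / L.len := by
  simp [nind, hx]

lemma nind_of_notMem {x : ℝ} (hx : x ∉ L.set) : nind L x = 0 := by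
  simp [nind, hx]

lemma integrable_nind (L : DI) : Integrable (nind L) := by
  rw [nind_eq_indicator]
  exact L.integrable_indicator_const _

lemma integral_nind (L : DI) : ∫ x, nind L x = 1 := by
  rw [nind_eq_indicator, integral_indicator_const _ L.measurableSet_set, DI.volume_real_set,
    smul_eq_mul, mul_one_div_cancel L.len_pos.ne']

lemma hcoef_nind_eq_zero_of_n_le (hn : L.n ≤ K.n) : hcoef (nind L) K = 0 := by
  rcases DI.subset_or_disjoint hn with hsub | hdisj
  · exact hcoef_eq_zero_of_forall_mem_eq fun x hx => nind_of_mem (hsub hx)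
  · exact hcoef_eq_zero_of_forall_mem_eq fun x hx => nind_of_notMem (Set.disjoint_left.1 hdisj hx)

lemma hcoef_nind_of_forall_mem_haar_eq {M : DI} {c : ℝ} (hLM : L.set ⊆ M.set)
    (hc : ∀ x ∈ M.set, haar K x = c) : hcoef (nind L) K = c := by
  have : (fun x => nind L x * haar K x) = fun x => nind L x * c := by
    funext x
    by_cases hx : x ∈ L.set
    · rw [hc x (hLM hx)]
    · simp [nind_of_notMem hx]
  rw [hcoef, this, integral_mul_const, integral_nind, one_mul]

lemma abs_hcoef_nind_le (L K : DI) : |hcoef (nind L) K| ≤ √(2 ^ K.n) := by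
  rcases le_or_gt L.n K.n with hn | hn
  · simp [hcoef_nind_eq_zero_of_n_le hn]
  · obtain ⟨c, hc⟩ := exists_forall_mem_haar_eq (L := L) (fun h => hn.ne (h ▸ rfl)) hn.le
    obtain ⟨x, hx⟩ := L.set_nonempty
    rw [hcoef_nind_of_forall_mem_haar_eq subset_rfl hc, ← hc x hx]
    exact abs_haar_le K x

lemma subset_and_n_lt_of_hcoef_nind_ne_zero (h : hcoef (nind L) K ≠ 0) :
    L.set ⊆ K.set ∧ K.n < L.n := by
  have hn : K.n < L.n := lt_of_not_ge fun hn => h (hcoef_nind_eq_zero_of_n_le hn)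
  refine ⟨(DI.subset_or_disjoint hn.le).resolve_right fun hdisj => h ?_, hn⟩
  exact hcoef_eq_zero_of_forall_mem_eq fun x hx =>
    nind_of_notMem (Set.disjoint_right.1 hdisj hx)

lemma hcoef_nind_eq_hcoef_nind_parent {I : DI} (hK : K ≠ I.parent) :
    hcoef (nind I) K = hcoef (nind I.parent) K := by
  rcases le_or_gt I.n K.n with hn | hn
  · rw [hcoef_nind_eq_zero_of_n_le hn,
      hcoef_nind_eq_zero_of_n_le (show I.parent.n ≤ K.n from by simp [DI.parent]; omega)]
  · obtain ⟨c, hc⟩ := exists_forall_mem_haar_eq hK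
      (show K.n ≤ I.parent.n from by simp [DI.parent]; omega)
    rw [hcoef_nind_of_forall_mem_haar_eq I.set_subset_parent hc,
      hcoef_nind_of_forall_mem_haar_eq subset_rfl hc]

end NormalizedIndicator

section ShiftAdj

noncomputable def shiftAdjTerm (f : ℝ → ℝ) (x : ℝ) (K : DI) : ℝ :=
  if K.IsEven then 0 else hcoef f K * K.sgn * haar K.parent x

lemma abs_shiftAdjTerm_le (f : ℝ → ℝ) (x : ℝ) (K : DI) :
    |shiftAdjTerm f x K| ≤ |hcoef f K| * √(2 ^ K.n) := by
  unfold shiftAdjTerm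
  split_ifs
  · simp [mul_nonneg (abs_nonneg _) (Real.sqrt_nonneg _)]
  · rw [abs_mul, abs_mul, DI.abs_sgn, mul_one]
    refine mul_le_mul_of_nonneg_left ((abs_haar_le _ x).trans (Real.sqrt_le_sqrt ?_)) (abs_nonneg _)
    exact zpow_le_zpow_right₀ one_le_two (by simp [DI.parent])

/-- The coefficients of `𝟏̃_L` live on the ancestors `K ⊋ L`, where they are `O(|K|^{-1/2})`,
so the series of `T* 𝟏̃_L` is dominated by a geometric series. -/
lemma summable_shiftAdjTerm_nind (L : DI) (x : ℝ) : Summable (shiftAdjTerm (nind L) x) := by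
  set ι : ℕ → DI := fun m => DI.parent^[m + 1] L
  have hι : ∀ m, (ι m).n = L.n - (m + 1 : ℕ) := fun m => DI.n_iterate_parent (m + 1) L
  have hinj : ι.Injective := fun a b h => by
    have := congrArg DI.n h
    rw [hι, hι] at this
    omega
  have hrange : ∀ K ∉ Set.range ι, shiftAdjTerm (nind L) x K = 0 := by
    intro K hK
    by_contra hne
    have hcoef_ne : hcoef (nind L) K ≠ 0 := fun h => hne (by simp [shiftAdjTerm, h])
    obtain ⟨hsub, hn⟩ := subset_and_n_lt_of_hcoef_nind_ne_zero hcoef_ne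
    obtain ⟨j, hj⟩ : ∃ j, (L.n - K.n).toNat = j + 1 :=
      ⟨_, (Nat.succ_pred_eq_of_pos (by omega)).symm⟩
    refine hK ⟨j, ?_⟩
    change DI.parent^[j + 1] L = K
    rw [← hj]
    exact (DI.eq_iterate_parent_of_subset hsub hn.le).symm
  rw [← hinj.summable_iff hrange]
  refine Summable.of_norm_bounded (summable_geometric_two.mul_left (2 ^ L.n)) fun m => ?_
  calc ‖shiftAdjTerm (nind L) x (ι m)‖
      ≤ |hcoef (nind L) (ι m)| * √(2 ^ (ι m).n) := abs_shiftAdjTerm_le _ _ _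
    _ ≤ √(2 ^ (ι m).n) * √(2 ^ (ι m).n) := by
        gcongr; exact abs_hcoef_nind_le L (ι m)
    _ = 2 ^ L.n * (1 / 2) ^ m / 2 := by
        rw [Real.mul_self_sqrt (by positivity), hι, zpow_sub₀ two_ne_zero, zpow_natCast, one_div,
          inv_pow, pow_succ]
        ring
    _ ≤ 2 ^ L.n * (1 / 2) ^ m := half_le_self (by positivity)

lemma exists_shiftAdj_nind_sub_eq_mul_haar (I : DI) :
    ∃ c, ∀ x, shiftAdj (nind I) x - shiftAdj (nind I.parent) x = c * haar I.parent.parent x := by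
  refine ⟨if I.parent.IsEven then 0
    else (hcoef (nind I) I.parent - hcoef (nind I.parent) I.parent) * I.parent.sgn, fun x => ?_⟩
  change ∑' K, shiftAdjTerm (nind I) x K - ∑' K, shiftAdjTerm (nind I.parent) x K = _
  rw [← (summable_shiftAdjTerm_nind I x).tsum_sub (summable_shiftAdjTerm_nind I.parent x),
    tsum_eq_single I.parent fun K hK => by
      simp [shiftAdjTerm, hcoef_nind_eq_hcoef_nind_parent hK]]
  unfold shiftAdjTerm
  split_ifs <;> ring

lemma hcoef_mul_const (f : ℝ → ℝ) (c : ℝ) (K : DI) :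
    hcoef (fun t => f t * c) K = hcoef f K * c := by
  rw [hcoef, hcoef, ← integral_mul_const]
  congr 1
  funext t
  ring

lemma shiftAdj_mul_const (f : ℝ → ℝ) (c x : ℝ) :
    shiftAdj (fun t => f t * c) x = shiftAdj f x * c := by
  unfold shiftAdj
  rw [← tsum_mul_right]
  congr 1
  funext K
  rw [hcoef_mul_const]
  split_ifs <;> ring

lemma shift1Adj_mul (f g : ℝ → ℝ) (p : ℝ × ℝ) :
    shift1Adj (fun q => f q.1 * g q.2) p = shiftAdj f p.1 * g p.2 :=
  shiftAdj_mul_const f (g p.2) p.1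

end ShiftAdj

lemma MeasureTheory.integral_add_of_integral_eq_zero {α E : Type*} [MeasurableSpace α]
    [NormedAddCommGroup E] [NormedSpace ℝ E] {μ : Measure α} {f g : α → E} (hg : Integrable g μ)
    (hg₀ : ∫ x, g x ∂μ = 0) :
    ∫ x, f x + g x ∂μ = ∫ x, f x ∂μ := by
  by_cases hf : Integrable f μ
  · rw [integral_add hf hg, hg₀, add_zero]
  · rw [integral_undef hf, integral_undef fun hfg => hf ((hfg.sub hg).congr (ae_of_all _ ?_))]
    simp

/-- **Horizontal spreading of coefficients:** if the dyadic rectangle `I × J` is at least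
2-deep in the dyadic open set `U` (the grandparent rectangle is contained in `U`), then
`(𝟏_U, T₁* 𝟏̃_I ⊗ 𝟏̃_J) = (𝟏_U, T₁* 𝟏̃_{Î} ⊗ 𝟏̃_J)`. -/
theorem stmt15 (S : Finset (DI × DI)) (I J : DI)
    (hdeep : dRect (DI.parent (DI.parent I), DI.parent (DI.parent J)) ⊆ ⋃ R ∈ S, dRect R) :
    (∫ p in (⋃ R ∈ S, dRect R), shift1Adj (fun q => nind I q.1 * nind J q.2) p) =
      ∫ p in (⋃ R ∈ S, dRect R), shift1Adj (fun q => nind (DI.parent I) q.1 * nind J q.2) p := by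
  obtain ⟨c, hc⟩ := exists_shiftAdj_nind_sub_eq_mul_haar I
  set D : ℝ × ℝ → ℝ := fun p => c * haar I.parent.parent p.1 * nind J p.2
  have hsplit : ∀ p, shift1Adj (fun q => nind I q.1 * nind J q.2) p
      = shift1Adj (fun q => nind I.parent q.1 * nind J q.2) p + D p := fun p => by
    rw [shift1Adj_mul, shift1Adj_mul, ← sub_eq_iff_eq_add', ← sub_mul, hc]
  have hD : Integrable D := ((integrable_haar _).const_mul c).mul_prod (integrable_nind J)
  have hD_supp : ∀ p ∉ ⋃ R ∈ S, dRect R, D p = 0 := fun p hp => by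
    by_cases h₁ : p.1 ∈ I.parent.parent.set
    · have h₂ : p.2 ∉ J.set := fun h₂ => hp (hdeep ⟨h₁,
        (J.set_subset_parent.trans J.parent.set_subset_parent) h₂⟩)
      simp [D, nind_of_notMem h₂]
    · simp [D, haar_of_notMem h₁]
  have hD₀ : ∫ p in ⋃ R ∈ S, dRect R, D p = 0 := by
    rw [setIntegral_eq_integral_of_forall_compl_eq_zero hD_supp, Measure.volume_eq_prod,
      integral_prod_mul (fun x => c * haar I.parent.parent x) (nind J), integral_const_mul,
      integral_haar, mul_zero, zero_mul]
  simp_rw [hsplit]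
  exact integral_add_of_integral_eq_zero hD.integrableOn hD₀
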